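/- arXiv:2504.10118 — 6 statements merged into one kernel-verified Lean document; each statement's English description precedes it below -/
import Mathlib

section
/- Let Q, z ∈ ℂ^m, d ∈ ℝ^m with dᵣ ≥ 0 for all r, and let F be a norm-preserving (up to the Parseval factor) invertible linear map on ℂ^m. Define R(w) = F⁻¹(√d ⊙ exp(iθ(F(Q⊙w)))) where θ is applied entrywise with θ(0)=0. Then for any z, z' ∈ ℂ^m, ‖Q⊙z - R(z)‖₂² ≤ ‖Q⊙z - R(z')‖₂², i.e., using the phase of z itself in the revised exit wave minimizes the misfit over choices of phase reference. -/
open Complex Finset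

lemma key (a : ℂ) (s : ℝ) (hs : 0 ≤ s) (φ : ℝ) :
    Complex.normSq (a - s * Complex.exp ((a.arg : ℂ) * Complex.I)) ≤
      Complex.normSq (a - s * Complex.exp ((φ : ℂ) * Complex.I)) := by
  rw [← Complex.sq_norm, ← Complex.sq_norm]
  have ha := Complex.norm_mul_exp_arg_mul_I a
  have h1 : ‖a - s * Complex.exp ((a.arg : ℂ) * Complex.I)‖ = |‖a‖ - s| := by
    calc ‖a - s * Complex.exp ((a.arg : ℂ) * Complex.I)‖
        = ‖(((‖a‖ : ℝ) : ℂ) - (s : ℂ)) * Complex.exp ((a.arg : ℂ) * Complex.I)‖ := by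
          rw [sub_mul, ha]
      _ = |‖a‖ - s| := by
          rw [norm_mul, Complex.norm_exp_ofReal_mul_I, ← Complex.ofReal_sub, Complex.norm_real, Real.norm_eq_abs, mul_one]
  rw [h1]
  have h2 : |‖a‖ - s| ≤ ‖a - s * Complex.exp ((φ : ℂ) * Complex.I)‖ := by
    have := abs_norm_sub_norm_le a (s * Complex.exp ((φ : ℂ) * Complex.I))
    simpa [norm_mul, Complex.norm_exp_ofReal_mul_I, Complex.norm_real, _root_.abs_of_nonneg hs] using this
  have h0 : (0:ℝ) ≤ |‖a‖ - s| := abs_nonneg _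
  nlinarith [norm_nonneg (a - s * Complex.exp ((φ : ℂ) * Complex.I))]

/-- Using the phase of `z` itself in the revised exit wave minimizes the misfit
over choices of phase reference: `‖Q⊙z - R(z)‖₂² ≤ ‖Q⊙z - R(z')‖₂²`, where
`R(w) = F⁻¹(√d ⊙ exp(iθ(F(Q⊙w))))`. -/
theorem stmt3 (m : ℕ) (Q : Fin m → ℂ) (d : Fin m → ℝ) (hd : ∀ r, 0 ≤ d r)
    (F : (Fin m → ℂ) ≃ₗ[ℂ] (Fin m → ℂ))
    (hPar : ∀ v : Fin m → ℂ,
      ∑ i, Complex.normSq (F v i) = m * ∑ i, Complex.normSq (v i))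
    (R : (Fin m → ℂ) → Fin m → ℂ)
    (hR : ∀ w, R w = F.symm (fun r =>
      ((Real.sqrt (d r) : ℝ) : ℂ) *
        Complex.exp (((F (fun i => Q i * w i) r).arg : ℂ) * Complex.I))) :
    ∀ z z' : Fin m → ℂ,
      ∑ i, Complex.normSq (Q i * z i - R z i) ≤
        ∑ i, Complex.normSq (Q i * z i - R z' i) := by
  intro z z'
  rcases Nat.eq_zero_or_pos m with hm | hm
  · subst hm; simp
  have hmul : (m : ℝ) * (∑ i, Complex.normSq (Q i * z i - R z i)) ≤
      (m : ℝ) * (∑ i, Complex.normSq (Q i * z i - R z' i)) := by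
    rw [← hPar, ← hPar]
    have hF : ∀ w, F (fun i => Q i * z i - R w i) = fun r =>
        F (fun i => Q i * z i) r -
          ((Real.sqrt (d r) : ℝ) : ℂ) *
            Complex.exp (((F (fun i => Q i * w i) r).arg : ℂ) * Complex.I) := by
      intro w
      have : (fun i => Q i * z i - R w i) =
          (fun i => Q i * z i) - (R w) := rfl
      rw [this, map_sub, hR w, F.apply_symm_apply]
      rfl
    rw [hF z, hF z']
    apply Finset.sum_le_sum
    intro r _
    exact key _ _ (Real.sqrt_nonneg _) _
  have hm' : (0:ℝ) < m := by exact_mod_cast hm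
  exact le_of_mul_le_mul_left hmul hm'
end

section
/- For vectors x, r ∈ ℂ^m with |xᵣ| and dᵣ ≥ 0: the function Φ(z) = ½‖Q⊙z - R(z)‖₂² is dominated by the quadratic surrogate Φ̃(z; z⁰) = ½‖Q⊙z - R(z⁰)‖₂², i.e., Φ(z) ≤ Φ̃(z; z⁰) for all z, and Φ(z⁰) = Φ̃(z⁰; z⁰), where R(w) = F⁻¹(√d ⊙ exp(iθ(F(Q⊙w)))) with F a DFT satisfying Parseval's identity. -/
open Complex Finset

lemma key_phase (c : ℂ) (s : ℝ) (hs : 0 ≤ s) (φ : ℝ) :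
    Complex.normSq (c - (s : ℂ) * Complex.exp ((c.arg : ℂ) * Complex.I)) ≤
    Complex.normSq (c - (s : ℂ) * Complex.exp ((φ : ℂ) * Complex.I)) := by
  have hgen : ∀ ψ : ℝ, Complex.normSq (c - (s : ℂ) * Complex.exp ((ψ : ℂ) * Complex.I))
      = Complex.normSq c + s^2 - 2 * s * (c * Complex.exp (-(ψ : ℂ) * Complex.I)).re := by
    intro ψ
    rw [Complex.normSq_sub]
    have habs : ‖Complex.exp ((ψ : ℂ) * Complex.I)‖ = 1 :=
      Complex.norm_exp_ofReal_mul_I ψ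
    have h1 : Complex.normSq ((s : ℂ) * Complex.exp ((ψ : ℂ) * Complex.I)) = s^2 := by
      rw [Complex.normSq_mul, Complex.normSq_ofReal, ← Complex.sq_norm, habs]
      ring
    have h2 : (starRingEnd ℂ) (Complex.exp ((ψ : ℂ) * Complex.I))
        = Complex.exp (-(ψ : ℂ) * Complex.I) := by
      rw [← Complex.exp_conj]
      congr 1
      simp
    have h3 : (c * (starRingEnd ℂ) ((s : ℂ) * Complex.exp ((ψ : ℂ) * Complex.I))).re
        = s * (c * Complex.exp (-(ψ : ℂ) * Complex.I)).re := by
      rw [map_mul, h2, Complex.conj_ofReal]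
      have : c * ((s : ℂ) * Complex.exp (-(ψ : ℂ) * Complex.I))
          = (s : ℂ) * (c * Complex.exp (-(ψ : ℂ) * Complex.I)) := by ring
      rw [this, Complex.mul_re, Complex.ofReal_re, Complex.ofReal_im]
      ring
    rw [h1, h3]
    ring
  rw [hgen, hgen]
  have hle : (c * Complex.exp (-(φ : ℂ) * Complex.I)).re ≤ ‖c‖ := by
    calc (c * Complex.exp (-(φ : ℂ) * Complex.I)).re
        ≤ ‖c * Complex.exp (-(φ : ℂ) * Complex.I)‖ := Complex.re_le_norm _
      _ = ‖c‖ := by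
          rw [norm_mul]
          have : -(φ : ℂ) * Complex.I = ((-φ : ℝ) : ℂ) * Complex.I := by push_cast; ring
          rw [this, Complex.norm_exp_ofReal_mul_I, mul_one]
  have heq : (c * Complex.exp (-(c.arg : ℂ) * Complex.I)).re = ‖c‖ := by
    have h := Complex.norm_mul_exp_arg_mul_I c
    have : c * Complex.exp (-(c.arg : ℂ) * Complex.I)
        = ((‖c‖ : ℝ) : ℂ) := by
      rw [← h]
      rw [mul_assoc, ← Complex.exp_add]
      norm_num
    rw [this, Complex.ofReal_re]
  rw [heq]
  nlinarith [hle]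


open Complex Finset

/-- Majorization: `Φ(z) = ½‖Q⊙z - R(z)‖₂²` is dominated by the quadratic surrogate
`Φ̃(z; z⁰) = ½‖Q⊙z - R(z⁰)‖₂²`, with equality of values at `z⁰`. -/
theorem stmt4 (m : ℕ) (Q : Fin m → ℂ) (d : Fin m → ℝ) (hd : ∀ r, 0 ≤ d r)
    (F : (Fin m → ℂ) ≃ₗ[ℂ] (Fin m → ℂ))
    (hPar : ∀ v : Fin m → ℂ,
      ∑ i, Complex.normSq (F v i) = m * ∑ i, Complex.normSq (v i))
    (R : (Fin m → ℂ) → Fin m → ℂ)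
    (hR : ∀ w, R w = F.symm (fun r =>
      ((Real.sqrt (d r) : ℝ) : ℂ) *
        Complex.exp (((F (fun i => Q i * w i) r).arg : ℂ) * Complex.I)))
    (Φ : (Fin m → ℂ) → ℝ)
    (hΦ : ∀ z, Φ z = (1/2) * ∑ i, Complex.normSq (Q i * z i - R z i))
    (Φt : (Fin m → ℂ) → (Fin m → ℂ) → ℝ)
    (hΦt : ∀ z z0, Φt z z0 = (1/2) * ∑ i, Complex.normSq (Q i * z i - R z0 i)) :
    (∀ z z0 : Fin m → ℂ, Φ z ≤ Φt z z0) ∧ (∀ z0 : Fin m → ℂ, Φ z0 = Φt z0 z0) := by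
  constructor
  · intro z z0
    rw [hΦ, hΦt]
    -- transfer through F
    have hmain : ∀ w : Fin m → ℂ,
        (m : ℝ) * ∑ i, Complex.normSq (Q i * z i - R w i)
        = ∑ r, Complex.normSq (F (fun i => Q i * z i) r -
            ((Real.sqrt (d r) : ℝ) : ℂ) *
              Complex.exp (((F (fun i => Q i * w i) r).arg : ℂ) * Complex.I)) := by
      intro w
      have hv : (fun i => Q i * z i - R w i)
          = (fun i => Q i * z i) - R w := by funext i; simp [Pi.sub_apply]
      have h1 := hPar ((fun i => Q i * z i) - R w)
      have hF : F ((fun i => Q i * z i) - R w)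
          = F (fun i => Q i * z i) - (fun r =>
            ((Real.sqrt (d r) : ℝ) : ℂ) *
              Complex.exp (((F (fun i => Q i * w i) r).arg : ℂ) * Complex.I)) := by
        rw [map_sub, hR, F.apply_symm_apply]
      rw [hF] at h1
      simp only [Pi.sub_apply] at h1
      exact h1.symm
    rcases Nat.eq_zero_or_pos m with hm | hm
    · subst hm; simp
    · have hmR : (0 : ℝ) < m := by exact_mod_cast hm
      have hineq : (m : ℝ) * ∑ i, Complex.normSq (Q i * z i - R z i)
          ≤ (m : ℝ) * ∑ i, Complex.normSq (Q i * z i - R z0 i) := by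
        rw [hmain z, hmain z0]
        apply Finset.sum_le_sum
        intro r _
        exact key_phase _ _ (Real.sqrt_nonneg _) _
      have := (mul_le_mul_iff_right₀ hmR).mp hineq
      linarith
  · intro z0
    rw [hΦ, hΦt]
end

section
/- Let I_h^H be the bin-averaging restriction (bins of size 4), I_H^h = 4·(I_h^H)^T, Q ∈ ℂ^{4N} with all entries nonzero, Q_H = I_h^H Q, W_z = |Q|² ⊘ (I_H^h I_h^H|Q|²), and W_R = (I_H^h Q_H) ⊙ W_z ⊘ Q. Then every entry of W_R has modulus at most 4, i.e., ‖W_R‖∞ ≤ 4. -/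
open Complex Finset

/-- Bin-averaging restriction on complex vectors. -/
noncomputable def restrict {N : ℕ} (A : Fin N × Fin 4 → ℂ) : Fin N → ℂ :=
  fun i => (1/4 : ℂ) * ∑ j : Fin 4, A (i, j)

/-- Bin-averaging restriction on real vectors. -/
noncomputable def restrictR {N : ℕ} (A : Fin N × Fin 4 → ℝ) : Fin N → ℝ :=
  fun i => (1/4 : ℝ) * ∑ j : Fin 4, A (i, j)

/-- Replication prolongation on complex vectors. -/
def prolong {N : ℕ} (B : Fin N → ℂ) : Fin N × Fin 4 → ℂ :=
  fun p => B p.1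

/-- Replication prolongation on real vectors. -/
def prolongR {N : ℕ} (B : Fin N → ℝ) : Fin N × Fin 4 → ℝ :=
  fun p => B p.1

lemma aux4 (a : Fin 4 → ℝ) (ha : ∀ k, 0 ≤ a k) (j : Fin 4) :
    (∑ k, a k) * a j ≤ 4 * ∑ k, (a k)^2 := by
  have h0 := ha 0; have h1 := ha 1; have h2 := ha 2; have h3 := ha 3
  fin_cases j <;> simp [Fin.sum_univ_four] <;>
    nlinarith [sq_nonneg (a 0 - a 1), sq_nonneg (a 0 - a 2), sq_nonneg (a 0 - a 3),
      sq_nonneg (a 1 - a 2), sq_nonneg (a 1 - a 3), sq_nonneg (a 2 - a 3)]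

/-- Every entry of `W_R = (I_H^h Q_H) ⊙ W_z ⊘ Q` has modulus at most `4`. -/
theorem stmt12 (N : ℕ) (Q : Fin N × Fin 4 → ℂ) (hQ : ∀ p, Q p ≠ 0) :
    let QH : Fin N → ℂ := restrict Q
    let Wz : Fin N × Fin 4 → ℂ := fun p =>
      ((Complex.normSq (Q p) : ℝ) : ℂ) /
        ((prolongR (restrictR (fun q => Complex.normSq (Q q))) p : ℝ) : ℂ)
    let WR : Fin N × Fin 4 → ℂ := fun p => prolong QH p * Wz p / Q p
    ∀ p, ‖WR p‖ ≤ 4 := by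
  intro QH Wz WR p
  obtain ⟨i, j⟩ := p
  set a : Fin 4 → ℝ := fun k => ‖Q (i, k)‖ with ha
  have hapos : ∀ k, 0 < a k := fun k => norm_pos_iff.mpr (hQ (i, k))
  have hanneg : ∀ k, 0 ≤ a k := fun k => (hapos k).le
  set S : ℝ := (1/4) * ∑ k, (a k)^2 with hS
  have hSpos : 0 < S := by
    have : 0 < ∑ k, (a k)^2 :=
      Finset.sum_pos (fun k _ => pow_pos (hapos k) 2) ⟨0, Finset.mem_univ 0⟩
    positivity
  have hrestr : restrictR (fun q => Complex.normSq (Q q)) i = S := by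
    simp only [restrictR, hS]
    congr 1
    refine Finset.sum_congr rfl fun k _ => ?_
    rw [ha]; simp [Complex.sq_norm]
  have habs : ‖WR (i, j)‖ = ‖QH i‖ * ((a j)^2 / S) / a j := by
    simp only [WR, Wz, prolong, prolongR, hrestr]
    rw [norm_div, norm_mul, ← Complex.ofReal_div, Complex.norm_real, Real.norm_eq_abs,
      _root_.abs_of_nonneg (div_nonneg (Complex.normSq_nonneg _) hSpos.le),
      ← Complex.sq_norm]
  have hQH : ‖QH i‖ ≤ (1/4) * ∑ k, a k := by
    simp only [QH, _root_.restrict]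
    rw [norm_mul]
    have h2 : ‖∑ k : Fin 4, Q (i, k)‖ ≤ ∑ k : Fin 4, a k := by
      simpa [ha] using norm_sum_le Finset.univ (fun k => Q (i, k))
    calc ‖(1/4 : ℂ)‖ * ‖∑ k : Fin 4, Q (i, k)‖
        ≤ ‖(1/4 : ℂ)‖ * ∑ k : Fin 4, a k :=
          mul_le_mul_of_nonneg_left h2 (norm_nonneg _)
      _ = (1/4) * ∑ k, a k := by norm_num
  rw [habs]
  have h1 : ‖QH i‖ * ((a j)^2 / S) / a j = ‖QH i‖ * a j / S := by
    field_simp [(hapos j).ne', hSpos.ne']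
  rw [h1, div_le_iff₀ hSpos]
  calc ‖QH i‖ * a j ≤ ((1/4) * ∑ k, a k) * a j :=
        mul_le_mul_of_nonneg_right hQH (hanneg j)
    _ ≤ 4 * S := by have := aux4 a hanneg j; rw [hS]; nlinarith
end

section
/- (Consistency of coarse surrogate value) With the restriction/prolongation pair I_h^H, I_H^h (bins of size 4), probe Q ∈ ℂ^{m} (entries nonzero), Q_H = I_h^H Q, weights W_z = |Q|² ⊘ (I_H^h I_h^H|Q|²) and W_R = (I_H^h Q_H) ⊙ W_z ⊘ Q, define for a fixed vector R ∈ ℂ^m the fine surrogate Φ̃(z) = ½‖Q⊙z - R‖₂² and coarse surrogate Φ̃_H(w) = ½‖Q_H⊙w - I_h^H(W_R⊙R)‖₂². Then for all z ∈ ℂ^m, with w = I_h^H(W_z⊙z): Φ̃_H(w) ≤ (‖W_R‖∞²/4)·Φ̃(z). -/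
open Complex Finset

lemma normSq_sum_le (a : Fin 4 → ℂ) :
    Complex.normSq (∑ j, a j) ≤ 4 * ∑ j, Complex.normSq (a j) := by
  have h1 : ‖∑ j, a j‖ ≤ ∑ j, ‖a j‖ := by
    simpa using norm_sum_le (Finset.univ : Finset (Fin 4)) a
  have h2 : (∑ j, ‖a j‖) ^ 2 ≤ 4 * ∑ j, ‖a j‖ ^ 2 := by
    have := sq_sum_le_card_mul_sum_sq (s := (Finset.univ : Finset (Fin 4)))
      (f := fun j => ‖a j‖)
    simpa using this
  calc Complex.normSq (∑ j, a j) = ‖∑ j, a j‖ ^ 2 := (Complex.sq_norm _).symm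
    _ ≤ (∑ j, ‖a j‖) ^ 2 := by
        exact pow_le_pow_left₀ (norm_nonneg _) h1 2
    _ ≤ 4 * ∑ j, ‖a j‖ ^ 2 := h2
    _ = 4 * ∑ j, Complex.normSq (a j) := by simp [Complex.sq_norm]

/-- Consistency of coarse surrogate values:
`Φ̃_H(I_h^H(W_z⊙z)) ≤ (‖W_R‖∞²/4)·Φ̃(z)`. -/
theorem stmt13 (N : ℕ) (Q : Fin N × Fin 4 → ℂ) (hQ : ∀ p, Q p ≠ 0)
    (R : Fin N × Fin 4 → ℂ) :
    let QH : Fin N → ℂ := restrict Q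
    let Wz : Fin N × Fin 4 → ℂ := fun p =>
      ((Complex.normSq (Q p) : ℝ) : ℂ) /
        ((prolongR (restrictR (fun q => Complex.normSq (Q q))) p : ℝ) : ℂ)
    let WR : Fin N × Fin 4 → ℂ := fun p => prolong QH p * Wz p / Q p
    let WRinf : ℝ := ⨆ p, ‖WR p‖
    let Phit : (Fin N × Fin 4 → ℂ) → ℝ := fun z =>
      (1/2) * ∑ p, Complex.normSq (Q p * z p - R p)
    let PhitH : (Fin N → ℂ) → ℝ := fun w =>
      (1/2) * ∑ i, Complex.normSq (QH i * w i - restrict (fun p => WR p * R p) i)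
    ∀ z : Fin N × Fin 4 → ℂ,
      PhitH (restrict (fun p => Wz p * z p)) ≤ WRinf ^ 2 / 4 * Phit z := by

  intro QH Wz WR WRinf Phit PhitH z
  set d : Fin N × Fin 4 → ℂ := fun p => Q p * z p - R p with hd
  have hWRd : ∀ p, WR p * d p = QH p.1 * (Wz p * z p) - WR p * R p := by
    intro p
    have : WR p * Q p = QH p.1 * Wz p := by
      show prolong QH p * Wz p / Q p * Q p = QH p.1 * Wz p
      rw [div_mul_cancel₀ _ (hQ p)]; rfl
    simp only [hd, mul_sub]
    rw [show WR p * (Q p * z p) = WR p * Q p * z p by ring, this]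
    ring
  have hkey : ∀ i, QH i * restrict (fun p => Wz p * z p) i
      - restrict (fun p => WR p * R p) i = restrict (fun p => WR p * d p) i := by
    intro i
    show QH i * ((1/4 : ℂ) * ∑ j : Fin 4, Wz (i,j) * z (i,j))
        - (1/4 : ℂ) * ∑ j : Fin 4, WR (i,j) * R (i,j)
        = (1/4 : ℂ) * ∑ j : Fin 4, WR (i,j) * d (i,j)
    simp only [Finset.mul_sum]
    rw [← Finset.sum_sub_distrib]
    refine Finset.sum_congr rfl fun j _ => ?_
    rw [hWRd (i,j)]
    show QH i * ((1/4 : ℂ) * (Wz (i,j) * z (i,j))) - (1/4 : ℂ) * (WR (i,j) * R (i,j))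
        = (1/4 : ℂ) * (QH i * (Wz (i,j) * z (i,j)) - WR (i,j) * R (i,j))
    ring
  have hWRinf_nonneg : 0 ≤ WRinf := Real.iSup_nonneg fun p => norm_nonneg _
  have hbd : ∀ p, ‖WR p‖ ≤ WRinf := by
    intro p
    exact le_ciSup (f := fun p => ‖WR p‖)
      (Set.Finite.bddAbove (Set.finite_range _)) p
  have hterm : ∀ p, Complex.normSq (WR p * d p) ≤ WRinf ^ 2 * Complex.normSq (d p) := by
    intro p
    rw [Complex.normSq_mul]
    have : Complex.normSq (WR p) ≤ WRinf ^ 2 := by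
      rw [← Complex.sq_norm]
      exact pow_le_pow_left₀ (norm_nonneg _) (hbd p) 2
    exact mul_le_mul_of_nonneg_right this (Complex.normSq_nonneg _)
  have hI : ∀ i, Complex.normSq (restrict (fun p => WR p * d p) i)
      ≤ (1/4 : ℝ) * ∑ j : Fin 4, WRinf ^ 2 * Complex.normSq (d (i,j)) := by
    intro i
    have h4 := normSq_sum_le (fun j => WR (i,j) * d (i,j))
    have : Complex.normSq (restrict (fun p => WR p * d p) i)
        = (1/16 : ℝ) * Complex.normSq (∑ j : Fin 4, WR (i,j) * d (i,j)) := by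
      rw [show _root_.restrict (fun p => WR p * d p) i
          = (1/4 : ℂ) * ∑ j : Fin 4, WR (i,j) * d (i,j) from rfl, Complex.normSq_mul]
      norm_num [Complex.normSq_apply]
    rw [this]
    calc (1/16 : ℝ) * Complex.normSq (∑ j : Fin 4, WR (i,j) * d (i,j))
        ≤ (1/16 : ℝ) * (4 * ∑ j : Fin 4, Complex.normSq (WR (i,j) * d (i,j))) := by
          exact mul_le_mul_of_nonneg_left h4 (by norm_num)
      _ = (1/4 : ℝ) * ∑ j : Fin 4, Complex.normSq (WR (i,j) * d (i,j)) := by ring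
      _ ≤ (1/4 : ℝ) * ∑ j : Fin 4, WRinf ^ 2 * Complex.normSq (d (i,j)) := by
          apply mul_le_mul_of_nonneg_left _ (by norm_num)
          exact Finset.sum_le_sum fun j _ => hterm (i,j)
  have hsum : ∑ i, Complex.normSq (QH i * restrict (fun p => Wz p * z p) i
      - restrict (fun p => WR p * R p) i)
      ≤ WRinf ^ 2 / 4 * ∑ p, Complex.normSq (d p) := by
    calc ∑ i, Complex.normSq (QH i * restrict (fun p => Wz p * z p) i
          - restrict (fun p => WR p * R p) i)
        = ∑ i, Complex.normSq (restrict (fun p => WR p * d p) i) := by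
          exact Finset.sum_congr rfl fun i _ => by rw [hkey i]
      _ ≤ ∑ i, (1/4 : ℝ) * ∑ j : Fin 4, WRinf ^ 2 * Complex.normSq (d (i,j)) := by
          exact Finset.sum_le_sum fun i _ => hI i
      _ = WRinf ^ 2 / 4 * ∑ p, Complex.normSq (d p) := by
          rw [Fintype.sum_prod_type, Finset.mul_sum]
          refine Finset.sum_congr rfl fun i _ => ?_
          rw [Finset.mul_sum, Finset.mul_sum]
          refine Finset.sum_congr rfl fun j _ => ?_
          ring
  show (1/2 : ℝ) * _ ≤ _
  calc (1/2 : ℝ) * ∑ i, Complex.normSq (QH i * restrict (fun p => Wz p * z p) i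
        - restrict (fun p => WR p * R p) i)
      ≤ (1/2 : ℝ) * (WRinf ^ 2 / 4 * ∑ p, Complex.normSq (d p)) := by
        exact mul_le_mul_of_nonneg_left hsum (by norm_num)
    _ = WRinf ^ 2 / 4 * ((1/2 : ℝ) * ∑ p, Complex.normSq (d p)) := by ring
end

section
/- (Consistency of coarse surrogate gradient) In the setting of the coarse/fine surrogates with Q entrywise nonzero, Q_H = I_h^H Q, W_z = |Q|² ⊘ (I_H^h I_h^H|Q|²), W_R = (I_H^h Q_H)⊙W_z⊘Q, W_u^H = |Q_H|² ⊘ (I_h^H|Q|²), fine surrogate Φ̃(z) = ½‖Q⊙z - R‖₂² with gradient ∇Φ̃(z) = conj(Q)⊙(Q⊙z - R), and coarse surrogate Φ̃_H(w) = ½‖Q_H⊙w - I_h^H(W_R⊙R)‖₂² with gradient ∇Φ̃_H(w) = conj(Q_H)⊙(Q_H⊙w - I_h^H(W_R⊙R)): for all z, with w = I_h^H(W_z⊙z), ‖∇Φ̃_H(w)‖₂ ≤ (1/2)·‖W_u^H‖∞·‖∇Φ̃(z)‖₂. -/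
open Complex Finset

/-- Consistency of coarse surrogate gradients:
`‖∇Φ̃_H(I_h^H(W_z⊙z))‖₂ ≤ (1/2)·‖W_u^H‖∞·‖∇Φ̃(z)‖₂`. -/
theorem stmt14 (N : ℕ) (Q : Fin N × Fin 4 → ℂ) (hQ : ∀ p, Q p ≠ 0)
    (R : Fin N × Fin 4 → ℂ) :
    let QH : Fin N → ℂ := restrict Q
    let Wz : Fin N × Fin 4 → ℂ := fun p =>
      ((Complex.normSq (Q p) : ℝ) : ℂ) /
        ((prolongR (restrictR (fun q => Complex.normSq (Q q))) p : ℝ) : ℂ)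
    let WR : Fin N × Fin 4 → ℂ := fun p => prolong QH p * Wz p / Q p
    let WuH : Fin N → ℝ := fun i =>
      Complex.normSq (QH i) / restrictR (fun p => Complex.normSq (Q p)) i
    let WuHinf : ℝ := ⨆ i, |WuH i|
    let gradFine : (Fin N × Fin 4 → ℂ) → Fin N × Fin 4 → ℂ := fun z p =>
      (starRingEnd ℂ) (Q p) * (Q p * z p - R p)
    let gradCoarse : (Fin N → ℂ) → Fin N → ℂ := fun w i =>
      (starRingEnd ℂ) (QH i) * (QH i * w i - restrict (fun p => WR p * R p) i)
    ∀ z : Fin N × Fin 4 → ℂ,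
      Real.sqrt (∑ i, Complex.normSq (gradCoarse (restrict (fun p => Wz p * z p)) i)) ≤
        (1/2) * WuHinf * Real.sqrt (∑ p, Complex.normSq (gradFine z p)) := by
  intro QH Wz WR WuH WuHinf gradFine gradCoarse z
  set S : Fin N → ℝ := restrictR (fun q => Complex.normSq (Q q)) with hSdef
  have hSpos : ∀ i, 0 < S i := by
    intro i
    have hsum : 0 < ∑ j : Fin 4, Complex.normSq (Q (i, j)) :=
      Finset.sum_pos (fun j _ => Complex.normSq_pos.2 (hQ _)) ⟨0, Finset.mem_univ _⟩
    rw [hSdef]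
    unfold restrictR
    positivity
  have hSne : ∀ i, ((S i : ℝ) : ℂ) ≠ 0 := fun i =>
    Complex.ofReal_ne_zero.2 (ne_of_gt (hSpos i))
  -- key pointwise identity
  have key : ∀ i, gradCoarse (restrict (fun p => Wz p * z p)) i
      = ((WuH i : ℝ) : ℂ) * restrict (gradFine z) i := by
    intro i
    show (starRingEnd ℂ) (QH i) *
        (QH i * ((1/4 : ℂ) * ∑ j : Fin 4, Wz (i, j) * z (i, j)) -
          (1/4 : ℂ) * ∑ j : Fin 4, WR (i, j) * R (i, j))
      = ((WuH i : ℝ) : ℂ) * ((1/4 : ℂ) * ∑ j : Fin 4, gradFine z (i, j))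
    have expand : ∀ j : Fin 4,
        (starRingEnd ℂ) (QH i) * ((1/4 : ℂ) *
          (QH i * (Wz (i, j) * z (i, j)) - WR (i, j) * R (i, j)))
        = ((WuH i : ℝ) : ℂ) * ((1/4 : ℂ) * gradFine z (i, j)) := by
      intro j
      have hWz : Wz (i, j) = (Q (i, j) * (starRingEnd ℂ) (Q (i, j))) / ((S i : ℝ) : ℂ) := by
        show ((Complex.normSq (Q (i, j)) : ℝ) : ℂ) / ((S (i, j).1 : ℝ) : ℂ) = _
        rw [Complex.mul_conj]
      have hWuH : ((WuH i : ℝ) : ℂ)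
          = (QH i * (starRingEnd ℂ) (QH i)) / ((S i : ℝ) : ℂ) := by
        show ((Complex.normSq (QH i) / S i : ℝ) : ℂ) = _
        push_cast
        rw [Complex.mul_conj]
      have hWR : WR (i, j) = QH i * Wz (i, j) / Q (i, j) := rfl
      rw [hWR, hWz, hWuH]
      show (starRingEnd ℂ) (QH i) * ((1/4 : ℂ) *
          (QH i * (Q (i, j) * (starRingEnd ℂ) (Q (i, j)) / ((S i : ℝ) : ℂ) * z (i, j)) -
            QH i * (Q (i, j) * (starRingEnd ℂ) (Q (i, j)) / ((S i : ℝ) : ℂ)) / Q (i, j) * R (i, j)))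
        = QH i * (starRingEnd ℂ) (QH i) / ((S i : ℝ) : ℂ) *
          ((1/4 : ℂ) * ((starRingEnd ℂ) (Q (i, j)) * (Q (i, j) * z (i, j) - R (i, j))))
      field_simp [hQ (i, j), hSne i]
    calc (starRingEnd ℂ) (QH i) *
        (QH i * ((1/4 : ℂ) * ∑ j : Fin 4, Wz (i, j) * z (i, j)) -
          (1/4 : ℂ) * ∑ j : Fin 4, WR (i, j) * R (i, j))
        = (starRingEnd ℂ) (QH i) * ∑ j : Fin 4, ((1/4 : ℂ) *
            (QH i * (Wz (i, j) * z (i, j)) - WR (i, j) * R (i, j))) := by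
          congr 1
          rw [Finset.mul_sum, Finset.mul_sum, Finset.mul_sum, ← Finset.sum_sub_distrib]
          exact Finset.sum_congr rfl (fun j _ => by ring)
      _ = ∑ j : Fin 4, (starRingEnd ℂ) (QH i) * ((1/4 : ℂ) *
            (QH i * (Wz (i, j) * z (i, j)) - WR (i, j) * R (i, j))) := by
          rw [Finset.mul_sum]
      _ = ∑ j : Fin 4, ((WuH i : ℝ) : ℂ) * ((1/4 : ℂ) * gradFine z (i, j)) :=
          Finset.sum_congr rfl (fun j _ => expand j)
      _ = ((WuH i : ℝ) : ℂ) * ((1/4 : ℂ) * ∑ j : Fin 4, gradFine z (i, j)) := by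
          rw [Finset.mul_sum, Finset.mul_sum]
  -- WuH nonneg, bounded by sup
  have hWuHnn : ∀ i, 0 ≤ WuH i := by
    intro i
    have := (hSpos i).le
    exact div_nonneg (Complex.normSq_nonneg _) this
  have hle : ∀ i, WuH i ≤ WuHinf := by
    intro i
    exact le_trans (le_abs_self _)
      (le_ciSup (f := fun i => |WuH i|) (Set.Finite.bddAbove (Set.finite_range _)) i)
  have hWuHinf_nn : 0 ≤ WuHinf := by
    rcases isEmpty_or_nonempty (Fin N) with h | h
    · simp [WuHinf, Real.iSup_of_isEmpty]
    · exact le_trans (abs_nonneg (WuH h.some))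
        (le_ciSup (f := fun i => |WuH i|) (Set.Finite.bddAbove (Set.finite_range _)) h.some)
  -- restriction shrinks the 2-norm by factor 1/2
  have hrest : ∀ i, Complex.normSq (restrict (gradFine z) i)
      ≤ (1/4 : ℝ) * ∑ j : Fin 4, Complex.normSq (gradFine z (i, j)) := by
    intro i
    have h1 : ‖restrict (gradFine z) i‖
        ≤ (1/4 : ℝ) * ∑ j : Fin 4, ‖gradFine z (i, j)‖ := by
      have e : restrict (gradFine z) i = (1/4 : ℂ) * ∑ j : Fin 4, gradFine z (i, j) := rfl
      rw [e, norm_mul]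
      calc ‖(1/4 : ℂ)‖ * ‖∑ j : Fin 4, gradFine z (i, j)‖
          ≤ ‖(1/4 : ℂ)‖ * ∑ j : Fin 4, ‖gradFine z (i, j)‖ := by
            exact mul_le_mul_of_nonneg_left (norm_sum_le _ _)
              (norm_nonneg _)
        _ = (1/4 : ℝ) * ∑ j : Fin 4, ‖gradFine z (i, j)‖ := by
            norm_num
    have h2 : ((1/4 : ℝ) * ∑ j : Fin 4, ‖gradFine z (i, j)‖)^2
        ≤ (1/4 : ℝ) * ∑ j : Fin 4, (‖gradFine z (i, j)‖)^2 := by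
      have hcs : (∑ j : Fin 4, ‖gradFine z (i, j)‖)^2
          ≤ (4 : ℝ) * ∑ j : Fin 4, (‖gradFine z (i, j)‖)^2 := by
        have := sq_sum_le_card_mul_sum_sq (s := (Finset.univ : Finset (Fin 4)))
          (f := fun j => ‖gradFine z (i, j)‖)
        simpa using this
      nlinarith [hcs]
    have h3 : Complex.normSq (restrict (gradFine z) i)
        = (‖restrict (gradFine z) i‖)^2 := (Complex.sq_norm _).symm
    rw [h3]
    calc (‖restrict (gradFine z) i‖)^2
        ≤ ((1/4 : ℝ) * ∑ j : Fin 4, ‖gradFine z (i, j)‖)^2 := by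
          apply sq_le_sq' _ h1
          have : 0 ≤ (1/4 : ℝ) * ∑ j : Fin 4, ‖gradFine z (i, j)‖ := by
            positivity
          linarith [norm_nonneg (restrict (gradFine z) i)]
      _ ≤ (1/4 : ℝ) * ∑ j : Fin 4, (‖gradFine z (i, j)‖)^2 := h2
      _ = (1/4 : ℝ) * ∑ j : Fin 4, Complex.normSq (gradFine z (i, j)) := by
          congr 1
          exact Finset.sum_congr rfl (fun j _ => Complex.sq_norm _)
  -- main chain
  have hsum : (∑ i, Complex.normSq (gradCoarse (restrict (fun p => Wz p * z p)) i))
      ≤ WuHinf^2 * ((1/4 : ℝ) * ∑ p, Complex.normSq (gradFine z p)) := by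
    calc (∑ i, Complex.normSq (gradCoarse (restrict (fun p => Wz p * z p)) i))
        = ∑ i, (WuH i)^2 * Complex.normSq (restrict (gradFine z) i) := by
          refine Finset.sum_congr rfl (fun i _ => ?_)
          rw [key i, Complex.normSq_mul, Complex.normSq_ofReal, sq]
      _ ≤ ∑ i, WuHinf^2 * ((1/4 : ℝ) * ∑ j : Fin 4, Complex.normSq (gradFine z (i, j))) := by
          refine Finset.sum_le_sum (fun i _ => ?_)
          have h1 : (WuH i)^2 ≤ WuHinf^2 := by
            have := hWuHnn i
            have := hle i
            nlinarith
          have h2 := hrest i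
          have h3 : (0 : ℝ) ≤ Complex.normSq (restrict (gradFine z) i) :=
            Complex.normSq_nonneg _
          nlinarith [sq_nonneg WuHinf]
      _ = WuHinf^2 * ((1/4 : ℝ) * ∑ p, Complex.normSq (gradFine z p)) := by
          rw [← Finset.mul_sum, Fintype.sum_prod_type, ← Finset.mul_sum]
  have hs := Real.sqrt_le_sqrt hsum
  calc Real.sqrt (∑ i, Complex.normSq (gradCoarse (restrict (fun p => Wz p * z p)) i))
      ≤ Real.sqrt (WuHinf^2 * ((1/4 : ℝ) * ∑ p, Complex.normSq (gradFine z p))) := hs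
    _ = (1/2) * WuHinf * Real.sqrt (∑ p, Complex.normSq (gradFine z p)) := by
        rw [Real.sqrt_mul (sq_nonneg _), Real.sqrt_mul (by norm_num)]
        rw [Real.sqrt_sq hWuHinf_nn]
        have : Real.sqrt (1/4 : ℝ) = 1/2 := by
          rw [show (1/4 : ℝ) = (1/2)^2 by norm_num, Real.sqrt_sq (by norm_num)]
        rw [this]
        all_goals ring
end

section
/- (Coarse update as weighted restricted fine gradient) With Q ∈ ℂ^{4N} entrywise nonzero, Q_H = I_h^H Q, W_z = |Q|² ⊘ (I_H^h I_h^H|Q|²), W_R = (I_H^h Q_H)⊙W_z⊘Q, u_H ∈ ℝ^N with u_H + |Q_H|² entrywise positive, fine gradient g = conj(Q)⊙(Q⊙z' - R) for some R ∈ ℂ^{4N}, coarse point z'_H = I_h^H(W_z⊙z'), and coarse revised wave R_H = I_h^H(W_R⊙R): the coarse proximal update e_H = ŵ - z'_H (with ŵ minimizing ½‖Q_H⊙w - R_H‖₂² + ½u_H^T|w - z'_H|²) satisfies e_H = -(|Q_H|² ⊘ (I_h^H|Q|²) ⊘ (u_H + |Q_H|²)) ⊙ (I_h^H g). In particular, I_H^h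 e_H is a descent direction for the fine surrogate at z': Re(g*(I_H^h e_H)) ≤ 0. -/
open Complex Finset

/-- Quadratic expansion around a stationary point. -/
lemma quad_id (a b c w ws : ℂ) (u : ℝ)
    (h : ((u + Complex.normSq a : ℝ) : ℂ) * ws = (starRingEnd ℂ) a * b + (u : ℂ) * c) :
    (1/2) * Complex.normSq (a*w - b) + (1/2) * (u * Complex.normSq (w - c)) =
    (1/2) * Complex.normSq (a*ws - b) + (1/2) * (u * Complex.normSq (ws - c))
      + (1/2) * ((u + Complex.normSq a) * Complex.normSq (w - ws)) := by
  have hre := congrArg Complex.re h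
  have him := congrArg Complex.im h
  simp only [Complex.mul_re, Complex.mul_im, Complex.add_re, Complex.add_im,
    Complex.ofReal_re, Complex.ofReal_im, Complex.conj_re, Complex.conj_im,
    Complex.normSq_apply] at hre him
  simp only [Complex.normSq_apply, Complex.mul_re, Complex.mul_im, Complex.sub_re,
    Complex.sub_im]
  linear_combination (w.re - ws.re) * hre + (w.im - ws.im) * him

/-- Sum over a pointwise update. -/
lemma sum_update_pt {N : ℕ} (h : Fin N → ℂ → ℝ) (f : Fin N → ℂ) (r : Fin N) (x : ℂ) :
    ∑ r', h r' (Function.update f r x r') = ∑ r', h r' (f r') - h r (f r) + h r x := by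
  have h1 : ∑ r' ∈ Finset.univ.erase r, h r' (Function.update f r x r')
      = ∑ r' ∈ Finset.univ.erase r, h r' (f r') :=
    Finset.sum_congr rfl fun r' hr' => by
      rw [Function.update_of_ne (Finset.ne_of_mem_erase hr')]
  rw [← Finset.add_sum_erase _ (fun r' => h r' (Function.update f r x r')) (Finset.mem_univ r),
      ← Finset.add_sum_erase _ (fun r' => h r' (f r')) (Finset.mem_univ r), h1,
      Function.update_self]
  ring

/-- Commuting binwise multiplication with restriction. -/
lemma helper4 (k a c : ℂ) (A B G : Fin 4 → ℂ)
    (h : ∀ j, a * (k * A j - B j) = c * G j) :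
    a * (k * ((1/4:ℂ) * ∑ j, A j) - (1/4:ℂ) * ∑ j, B j) = c * ((1/4:ℂ) * ∑ j, G j) := by
  have e1 : ∑ j, a * (k * A j - B j) = ∑ j, c * G j := Finset.sum_congr rfl fun j _ => h j
  simp only [mul_sub, Finset.sum_sub_distrib, ← Finset.mul_sum] at e1
  linear_combination (1/4 : ℂ) * e1

/-- Descent term computation. -/
lemma desc (s : ℂ) (c : ℝ) :
    (starRingEnd ℂ) (4 * s) * (-(c : ℂ) * s) = ((-(4 * c * Complex.normSq s) : ℝ) : ℂ) := by
  rw [map_mul]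
  have h4 : (starRingEnd ℂ) (4 : ℂ) = 4 := by rw [show (4:ℂ) = ((4:ℝ):ℂ) by norm_num, Complex.conj_ofReal]
  have hs : (starRingEnd ℂ) s * s = ((Complex.normSq s : ℝ) : ℂ) := by
    rw [mul_comm, Complex.mul_conj]
  rw [h4]
  push_cast
  linear_combination (-(4 : ℂ) * (c : ℂ)) * hs

/-- Coarse update as weighted restricted fine gradient: the coarse proximal update
`e_H = ŵ - z'_H` satisfies `e_H = -(|Q_H|²⊘(I_h^H|Q|²)⊘(u_H+|Q_H|²))⊙(I_h^H g)`, and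
`I_H^h e_H` is a descent direction for the fine surrogate at `z'`. -/
theorem stmt17 (N : ℕ) (Q : Fin N × Fin 4 → ℂ) (hQ : ∀ p, Q p ≠ 0)
    (R z' : Fin N × Fin 4 → ℂ) (uH : Fin N → ℝ)
    (hpos : ∀ r, 0 < uH r + Complex.normSq (restrict Q r))
    (wh : Fin N → ℂ)
    (hwh : ∀ w : Fin N → ℂ,
      (1/2) * ∑ r, Complex.normSq (restrict Q r * wh r -
          restrict (fun p => (prolong (restrict Q) p *
            (((Complex.normSq (Q p) : ℝ) : ℂ) /
              ((prolongR (restrictR (fun q => Complex.normSq (Q q))) p : ℝ) : ℂ)) / Q p) * R p) r) +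
      (1/2) * ∑ r, uH r * Complex.normSq (wh r -
          restrict (fun p => (((Complex.normSq (Q p) : ℝ) : ℂ) /
              ((prolongR (restrictR (fun q => Complex.normSq (Q q))) p : ℝ) : ℂ)) * z' p) r) ≤
      (1/2) * ∑ r, Complex.normSq (restrict Q r * w r -
          restrict (fun p => (prolong (restrict Q) p *
            (((Complex.normSq (Q p) : ℝ) : ℂ) /
              ((prolongR (restrictR (fun q => Complex.normSq (Q q))) p : ℝ) : ℂ)) / Q p) * R p) r) +
      (1/2) * ∑ r, uH r * Complex.normSq (w r -
          restrict (fun p => (((Complex.normSq (Q p) : ℝ) : ℂ) /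
              ((prolongR (restrictR (fun q => Complex.normSq (Q q))) p : ℝ) : ℂ)) * z' p) r)) :
    let QH : Fin N → ℂ := restrict Q
    let Wz : Fin N × Fin 4 → ℂ := fun p =>
      ((Complex.normSq (Q p) : ℝ) : ℂ) /
        ((prolongR (restrictR (fun q => Complex.normSq (Q q))) p : ℝ) : ℂ)
    let g : Fin N × Fin 4 → ℂ := fun p => (starRingEnd ℂ) (Q p) * (Q p * z' p - R p)
    let zH : Fin N → ℂ := restrict (fun p => Wz p * z' p)
    let eH : Fin N → ℂ := fun r => wh r - zH r
    (∀ r, eH r =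
      -(((Complex.normSq (QH r) / restrictR (fun p => Complex.normSq (Q p)) r /
          (uH r + Complex.normSq (QH r))) : ℝ) : ℂ) * restrict g r) ∧
    (∑ p, (starRingEnd ℂ) (g p) * prolong eH p).re ≤ 0 := by
  intro QH Wz g zH eH
  -- notation
  set S : Fin N → ℝ := restrictR (fun q => Complex.normSq (Q q)) with hSdef
  have hSpos : ∀ r, 0 < S r := by
    intro r
    have hsum : 0 < ∑ j : Fin 4, Complex.normSq (Q (r, j)) :=
      Finset.sum_pos (fun j _ => Complex.normSq_pos.2 (hQ _)) ⟨0, Finset.mem_univ 0⟩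
    rw [hSdef]
    unfold restrictR
    linarith
  have hSne : ∀ r, ((S r : ℝ) : ℂ) ≠ 0 := fun r => Complex.ofReal_ne_zero.2 (hSpos r).ne'
  have hKpos : ∀ r, (0:ℝ) < uH r + Complex.normSq (restrict Q r) := hpos
  have hKne : ∀ r, ((uH r + Complex.normSq (restrict Q r) : ℝ) : ℂ) ≠ 0 :=
    fun r => Complex.ofReal_ne_zero.2 (hKpos r).ne'
  -- shorthand for the coarse data
  set RH : Fin N → ℂ := restrict (fun p => (prolong (restrict Q) p *
      (((Complex.normSq (Q p) : ℝ) : ℂ) /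
        ((prolongR (restrictR (fun q => Complex.normSq (Q q))) p : ℝ) : ℂ)) / Q p) * R p)
    with hRHdef
  set ZH : Fin N → ℂ := restrict (fun p => (((Complex.normSq (Q p) : ℝ) : ℂ) /
      ((prolongR (restrictR (fun q => Complex.normSq (Q q))) p : ℝ) : ℂ)) * z' p) with hZHdef
  -- Step 1: wh is the pointwise minimizer
  have key : ∀ r : Fin N, wh r = ((starRingEnd ℂ) (restrict Q r) * RH r + (uH r : ℂ) * ZH r) /
      ((uH r + Complex.normSq (restrict Q r) : ℝ) : ℂ) := by
    intro r
    set ws : ℂ := ((starRingEnd ℂ) (restrict Q r) * RH r + (uH r : ℂ) * ZH r) /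
      ((uH r + Complex.normSq (restrict Q r) : ℝ) : ℂ) with hwsdef
    have hwseq : ((uH r + Complex.normSq (restrict Q r) : ℝ) : ℂ) * ws =
        (starRingEnd ℂ) (restrict Q r) * RH r + (uH r : ℂ) * ZH r := by
      rw [hwsdef, mul_div_cancel₀ _ (hKne r)]
    have H := hwh (Function.update wh r ws)
    have e1 := sum_update_pt (fun r' x => Complex.normSq (restrict Q r' * x - RH r')) wh r ws
    have e2 := sum_update_pt (fun r' x => uH r' * Complex.normSq (x - ZH r')) wh r ws
    beta_reduce at e1 e2
    rw [e1, e2] at H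
    have hid := quad_id (restrict Q r) (RH r) (ZH r) (wh r) ws (uH r) hwseq
    have hn0 : Complex.normSq (wh r - ws) = 0 := by
      have hnn := Complex.normSq_nonneg (wh r - ws)
      nlinarith [mul_nonneg (hKpos r).le hnn, hKpos r]
    have h0 : wh r - ws = 0 := Complex.normSq_eq_zero.mp hn0
    exact sub_eq_zero.mp h0
  -- Step 2: the gradient identity
  have hgr : ∀ r : Fin N, (starRingEnd ℂ) (_root_.restrict Q r) * (_root_.restrict Q r * ZH r - RH r)
      = (((Complex.normSq (_root_.restrict Q r) / S r) : ℝ) : ℂ) * _root_.restrict g r := by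
    intro r
    rw [hRHdef, hZHdef]
    unfold _root_.restrict
    refine helper4 _ _ _ _ _ _ fun j => ?_
    have hq := hQ (r, j)
    have hs := hSne r
    have hnq : ((Complex.normSq (Q (r, j)) : ℝ) : ℂ) = Q (r, j) * (starRingEnd ℂ) (Q (r, j)) :=
      (Complex.mul_conj _).symm
    have hprol : prolongR (restrictR fun q => Complex.normSq (Q q)) (r, j) = S r := rfl
    have hpro2 : prolong (_root_.restrict Q) (r, j) = _root_.restrict Q r := rfl
    show (starRingEnd ℂ) (_root_.restrict Q r) *
        (_root_.restrict Q r * (((Complex.normSq (Q (r, j)) : ℝ) : ℂ) /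
            ((prolongR (restrictR fun q => Complex.normSq (Q q)) (r, j) : ℝ) : ℂ) * z' (r, j)) -
          prolong (_root_.restrict Q) (r, j) *
            (((Complex.normSq (Q (r, j)) : ℝ) : ℂ) /
              ((prolongR (restrictR fun q => Complex.normSq (Q q)) (r, j) : ℝ) : ℂ)) / Q (r, j) *
            R (r, j)) =
      (((Complex.normSq (_root_.restrict Q r) / S r : ℝ)) : ℂ) * g (r, j)
    rw [hprol, hpro2]
    show _ = (((Complex.normSq (_root_.restrict Q r) / S r : ℝ)) : ℂ) *
      ((starRingEnd ℂ) (Q (r, j)) * (Q (r, j) * z' (r, j) - R (r, j)))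
    have hnqh : ((Complex.normSq (_root_.restrict Q r) : ℝ) : ℂ)
        = _root_.restrict Q r * (starRingEnd ℂ) (_root_.restrict Q r) := (Complex.mul_conj _).symm
    push_cast [Complex.ofReal_div]
    rw [hnq, hnqh]
    field_simp
  -- Step 3: the coarse update formula
  have hform : ∀ r : Fin N, wh r - ZH r =
      -(((Complex.normSq (_root_.restrict Q r) / S r /
          (uH r + Complex.normSq (_root_.restrict Q r))) : ℝ) : ℂ) * _root_.restrict g r := by
    intro r
    have hc : (starRingEnd ℂ) (_root_.restrict Q r) * _root_.restrict Q r
        = ((Complex.normSq (_root_.restrict Q r) : ℝ) : ℂ) := by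
      rw [mul_comm, Complex.mul_conj]
    have h2 : wh r - ZH r = -((starRingEnd ℂ) (_root_.restrict Q r) *
        (_root_.restrict Q r * ZH r - RH r)) / ((uH r + Complex.normSq (_root_.restrict Q r) : ℝ) : ℂ) := by
      rw [key r]
      rw [div_sub' (hKne r), neg_div, div_eq_iff (hKne r), neg_mul,
        div_mul_cancel₀ _ (hKne r)]
      push_cast
      linear_combination ZH r * hc
    rw [h2, hgr r]
    push_cast [Complex.ofReal_div]
    field_simp
  -- Conclusion
  refine ⟨fun r => hform r, ?_⟩
  have heH : ∀ r, eH r = -(((Complex.normSq (_root_.restrict Q r) / S r /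
      (uH r + Complex.normSq (_root_.restrict Q r))) : ℝ) : ℂ) * _root_.restrict g r :=
    fun r => hform r
  rw [Fintype.sum_prod_type]
  rw [Complex.re_sum]
  apply Finset.sum_nonpos
  intro r _
  have e : ∑ j : Fin 4, (starRingEnd ℂ) (g (r, j)) * prolong eH (r, j)
      = ((-(4 * (Complex.normSq (_root_.restrict Q r) / S r /
          (uH r + Complex.normSq (_root_.restrict Q r))) *
            Complex.normSq (_root_.restrict g r)) : ℝ) : ℂ) := by
    have h4s : ∑ j : Fin 4, g (r, j) = 4 * _root_.restrict g r := by
      show _ = 4 * ((1/4 : ℂ) * ∑ j : Fin 4, g (r, j))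
      ring
    calc ∑ j : Fin 4, (starRingEnd ℂ) (g (r, j)) * prolong eH (r, j)
        = (∑ j : Fin 4, (starRingEnd ℂ) (g (r, j))) * eH r := by
          rw [Finset.sum_mul]
          exact Finset.sum_congr rfl fun j _ => rfl
      _ = (starRingEnd ℂ) (4 * _root_.restrict g r) * eH r := by rw [← map_sum, h4s]
      _ = _ := by rw [heH r]; exact desc _ _
  rw [e, Complex.ofReal_re]
  have hc : 0 ≤ Complex.normSq (_root_.restrict Q r) / S r /
      (uH r + Complex.normSq (_root_.restrict Q r)) :=
    div_nonneg (div_nonneg (Complex.normSq_nonneg _) (hSpos r).le) (hKpos r).le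
  nlinarith [Complex.normSq_nonneg (_root_.restrict g r), hc]
end
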